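/- arXiv:2409.06998 — 6 statements merged into one kernel-verified Lean document; each statement's English description precedes it below -/
import Mathlib

section
/- For every L ≥ 1 and every subgroup index i ∈ M, the difference between the two class means of the L-hop aggregated features within subgroup i satisfies μ⁽ᴸ⁾₁ᵢ − μ⁽ᴸ⁾₂ᵢ = (p i − q i) · r^(L−1) • (μ₁ − μ₂). -/
open scoped BigOperators

/-- CSBM-Subgroup mean recursion: `(csbmMu μ1 μ2 w p L i).1` is the class-1 mean
`μ⁽ᴸ⁾₁ᵢ` and `(csbmMu μ1 μ2 w p L i).2` is the class-2 mean `μ⁽ᴸ⁾₂ᵢ` of the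
`L`-hop aggregated features of subgroup `i`. -/
noncomputable def csbmMu {E : Type*} [AddCommGroup E] [Module ℝ E]
    {M : Type*} [Fintype M] (μ1 μ2 : E) (w p : M → ℝ) : ℕ → M → E × E
  | 0, _ => (μ1, μ2)
  | L + 1, i =>
      (p i • ∑ m, w m • (csbmMu μ1 μ2 w p L m).1
          + (1 - p i) • ∑ m, w m • (csbmMu μ1 μ2 w p L m).2,
       (1 - p i) • ∑ m, w m • (csbmMu μ1 μ2 w p L m).1
          + p i • ∑ m, w m • (csbmMu μ1 μ2 w p L m).2)

theorem csbm_intra_subgroup_mean_difference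
    {E : Type*} [AddCommGroup E] [Module ℝ E] {M : Type*} [Fintype M]
    (μ1 μ2 : E) (w p : M → ℝ)
    (hw : ∀ m, 0 ≤ w m) (hw1 : ∑ m, w m = 1)
    (hp0 : ∀ m, 0 ≤ p m) (hp1 : ∀ m, p m ≤ 1)
    (r : ℝ) (hr : r = ∑ m, w m * (p m - (1 - p m)))
    (L : ℕ) (hL : 1 ≤ L) (i : M) :
    (csbmMu μ1 μ2 w p L i).1 - (csbmMu μ1 μ2 w p L i).2
      = ((p i - (1 - p i)) * r ^ (L - 1)) • (μ1 - μ2) := by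
  induction L generalizing i with
  | zero => omega
  | succ L ih =>
    have key : (csbmMu μ1 μ2 w p (L+1) i).1 - (csbmMu μ1 μ2 w p (L+1) i).2
        = (p i - (1 - p i)) • ∑ m, w m •
            ((csbmMu μ1 μ2 w p L m).1 - (csbmMu μ1 μ2 w p L m).2) := by
      simp only [csbmMu, smul_sub, Finset.smul_sum, sub_smul, Finset.sum_sub_distrib]
      abel
    rcases Nat.eq_zero_or_pos L with hL0 | hL1
    · subst hL0
      rw [key]
      have h2 : ∑ m, w m • ((csbmMu μ1 μ2 w p 0 m).1 - (csbmMu μ1 μ2 w p 0 m).2)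
          = μ1 - μ2 := by
        simp only [csbmMu, ← Finset.sum_smul, hw1, one_smul]
      rw [h2]; simp
    · rw [key]
      have h2 : ∑ m, w m • ((csbmMu μ1 μ2 w p L m).1 - (csbmMu μ1 μ2 w p L m).2)
          = ((∑ m, w m * (p m - (1 - p m))) * r ^ (L - 1)) • (μ1 - μ2) := by
        calc ∑ m, w m • ((csbmMu μ1 μ2 w p L m).1 - (csbmMu μ1 μ2 w p L m).2)
            = ∑ m, (w m * ((p m - (1 - p m)) * r ^ (L - 1))) • (μ1 - μ2) := by
              exact Finset.sum_congr rfl fun m _ => by rw [ih hL1 m, smul_smul]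
          _ = ((∑ m, w m * (p m - (1 - p m))) * r ^ (L - 1)) • (μ1 - μ2) := by
              rw [← Finset.sum_smul, Finset.sum_mul]
              congr 1
              exact Finset.sum_congr rfl fun m _ => by ring
      rw [h2, ← hr, smul_smul]
      have h3 : r * r ^ (L - 1) = r ^ (L + 1 - 1) := by
        rw [← pow_succ']
        congr 1
        omega
      rw [h3]
end

section
/- For every L ≥ 1 and all subgroup indices i, j ∈ M, the class-1 means of the L-hop aggregated features across subgroups satisfy μ⁽ᴸ⁾₁ᵢ − μ⁽ᴸ⁾₁ⱼ = (p i − p j) · r^(L−1) • (μ₁ − μ₂). -/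
open scoped BigOperators

lemma csbm_S {E : Type*} [AddCommGroup E] [Module ℝ E] {M : Type*} [Fintype M]
    (μ1 μ2 : E) (w p : M → ℝ) (hw1 : ∑ m, w m = 1)
    (r : ℝ) (hr : r = ∑ m, w m * (p m - (1 - p m))) (L : ℕ) :
    (∑ m, w m • (csbmMu μ1 μ2 w p L m).1) - (∑ m, w m • (csbmMu μ1 μ2 w p L m).2)
      = r ^ L • (μ1 - μ2) := by
  induction L with
  | zero =>
      simp [csbmMu, ← Finset.sum_smul, hw1, smul_sub]
  | succ L ih =>
      have h : ∀ m : M, w m • (csbmMu μ1 μ2 w p (L+1) m).1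
          - w m • (csbmMu μ1 μ2 w p (L+1) m).2
          = (w m * (p m - (1 - p m))) •
            ((∑ m, w m • (csbmMu μ1 μ2 w p L m).1)
              - (∑ m, w m • (csbmMu μ1 μ2 w p L m).2)) := by
        intro m
        simp only [csbmMu]
        module
      rw [← Finset.sum_sub_distrib]
      simp_rw [h]
      rw [← Finset.sum_smul, ← hr, ih, pow_succ, mul_comm, mul_smul]

theorem csbm_cross_subgroup_class1_mean_difference
    {E : Type*} [AddCommGroup E] [Module ℝ E] {M : Type*} [Fintype M]
    (μ1 μ2 : E) (w p : M → ℝ)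
    (hw : ∀ m, 0 ≤ w m) (hw1 : ∑ m, w m = 1)
    (hp0 : ∀ m, 0 ≤ p m) (hp1 : ∀ m, p m ≤ 1)
    (r : ℝ) (hr : r = ∑ m, w m * (p m - (1 - p m)))
    (L : ℕ) (hL : 1 ≤ L) (i j : M) :
    (csbmMu μ1 μ2 w p L i).1 - (csbmMu μ1 μ2 w p L j).1
      = ((p i - p j) * r ^ (L - 1)) • (μ1 - μ2) := by
  obtain ⟨K, rfl⟩ := Nat.exists_eq_add_of_le hL
  have hS := csbm_S μ1 μ2 w p hw1 r hr K
  rw [show 1 + K = K + 1 by omega]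
  simp only [csbmMu, Nat.add_sub_cancel]
  rw [mul_smul, ← hS]
  module
end

section
/- For every L ≥ 1 and all subgroup indices i, j ∈ M, the class-2 cross-subgroup mean difference is the negative of the class-1 one: μ⁽ᴸ⁾₂ᵢ − μ⁽ᴸ⁾₂ⱼ = −(μ⁽ᴸ⁾₁ᵢ − μ⁽ᴸ⁾₁ⱼ) = −(p i − p j) · r^(L−1) • (μ₁ − μ₂). -/
open scoped BigOperators

lemma csbm_diff_sum {E : Type*} [AddCommGroup E] [Module ℝ E] {M : Type*} [Fintype M]
    (μ1 μ2 : E) (w p : M → ℝ) (hw1 : ∑ m, w m = 1)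
    (r : ℝ) (hr : r = ∑ m, w m * (p m - (1 - p m))) :
    ∀ L : ℕ, (∑ m, w m • (csbmMu μ1 μ2 w p L m).1)
        - (∑ m, w m • (csbmMu μ1 μ2 w p L m).2) = r ^ L • (μ1 - μ2) := by
  intro L
  induction L with
  | zero =>
      simp only [csbmMu, pow_zero, one_smul]
      rw [← Finset.sum_sub_distrib]
      simp only [← smul_sub]
      rw [← Finset.sum_smul, hw1, one_smul]
  | succ L ih =>
      simp only [csbmMu]
      rw [← Finset.sum_sub_distrib]
      have : ∀ m : M, (w m • (p m • ∑ n, w n • (csbmMu μ1 μ2 w p L n).1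
            + (1 - p m) • ∑ n, w n • (csbmMu μ1 μ2 w p L n).2))
          - (w m • ((1 - p m) • ∑ n, w n • (csbmMu μ1 μ2 w p L n).1
            + p m • ∑ n, w n • (csbmMu μ1 μ2 w p L n).2))
          = (w m * (p m - (1 - p m))) • ((∑ n, w n • (csbmMu μ1 μ2 w p L n).1)
              - ∑ n, w n • (csbmMu μ1 μ2 w p L n).2) := by
        intro m
        module
      rw [Finset.sum_congr rfl (fun m _ => this m), ← Finset.sum_smul, ← hr, ih,
        smul_smul, ← pow_succ']

theorem csbm_cross_subgroup_class2_mean_difference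
    {E : Type*} [AddCommGroup E] [Module ℝ E] {M : Type*} [Fintype M]
    (μ1 μ2 : E) (w p : M → ℝ)
    (hw : ∀ m, 0 ≤ w m) (hw1 : ∑ m, w m = 1)
    (hp0 : ∀ m, 0 ≤ p m) (hp1 : ∀ m, p m ≤ 1)
    (r : ℝ) (hr : r = ∑ m, w m * (p m - (1 - p m)))
    (L : ℕ) (hL : 1 ≤ L) (i j : M) :
    (csbmMu μ1 μ2 w p L i).2 - (csbmMu μ1 μ2 w p L j).2
        = -((csbmMu μ1 μ2 w p L i).1 - (csbmMu μ1 μ2 w p L j).1) ∧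
      (csbmMu μ1 μ2 w p L i).2 - (csbmMu μ1 μ2 w p L j).2
        = -(((p i - p j) * r ^ (L - 1)) • (μ1 - μ2)) := by
  obtain ⟨K, rfl⟩ : ∃ K, L = K + 1 := ⟨L - 1, (Nat.succ_pred_eq_of_pos hL).symm⟩
  have hS := csbm_diff_sum μ1 μ2 w p hw1 r hr K
  set A := ∑ n, w n • (csbmMu μ1 μ2 w p K n).1 with hA
  set B := ∑ n, w n • (csbmMu μ1 μ2 w p K n).2 with hB
  have h1 : (csbmMu μ1 μ2 w p (K+1) i).1 - (csbmMu μ1 μ2 w p (K+1) j).1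
      = (p i - p j) • (A - B) := by
    simp only [csbmMu, ← hA, ← hB]
    module
  have h2 : (csbmMu μ1 μ2 w p (K+1) i).2 - (csbmMu μ1 μ2 w p (K+1) j).2
      = -((p i - p j) • (A - B)) := by
    simp only [csbmMu, ← hA, ← hB]
    module
  refine ⟨by rw [h1, h2], ?_⟩
  rw [h2, hS, Nat.add_sub_cancel, smul_smul]
end

section
/- For every L ≥ 1 and every subgroup index i ∈ M, the aggregated class means have the explicit closed form μ⁽ᴸ⁾₁ᵢ = (1/2) • (μ₁ + μ₂) + ((p i − q i)·r^(L−1)/2) • (μ₁ − μ₂) and μ⁽ᴸ⁾₂ᵢ = (1/2) • (μ₁ + μ₂) − ((p i − q i)·r^(L−1)/2) • (μ₁ − μ₂). -/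
open scoped BigOperators

theorem csbm_mean_closed_form
    {E : Type*} [AddCommGroup E] [Module ℝ E] {M : Type*} [Fintype M]
    (μ1 μ2 : E) (w p : M → ℝ)
    (hw : ∀ m, 0 ≤ w m) (hw1 : ∑ m, w m = 1)
    (hp0 : ∀ m, 0 ≤ p m) (hp1 : ∀ m, p m ≤ 1)
    (r : ℝ) (hr : r = ∑ m, w m * (p m - (1 - p m)))
    (L : ℕ) (hL : 1 ≤ L) (i : M) :
    (csbmMu μ1 μ2 w p L i).1
        = (1 / 2 : ℝ) • (μ1 + μ2)
          + ((p i - (1 - p i)) * r ^ (L - 1) / 2) • (μ1 - μ2) ∧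
    (csbmMu μ1 μ2 w p L i).2
        = (1 / 2 : ℝ) • (μ1 + μ2)
          - ((p i - (1 - p i)) * r ^ (L - 1) / 2) • (μ1 - μ2) := by

  obtain ⟨K, rfl⟩ : ∃ K, L = K + 1 := ⟨L - 1, (Nat.succ_pred_eq_of_pos hL).symm⟩
  simp only [Nat.add_sub_cancel]
  clear hL
  induction K generalizing i with
  | zero =>
    simp only [csbmMu, pow_zero]
    constructor <;>
    · rw [← Finset.sum_smul, ← Finset.sum_smul, hw1, one_smul]
      module
  | succ K ih =>
    have key : ∀ m, w m * ((p m - (1 - p m)) * r ^ K / 2) =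
        (w m * (p m - (1 - p m))) * (r ^ K / 2) := fun m => by ring
    have hs : (∑ m, w m * ((p m - (1 - p m)) * r ^ K / 2)) = r ^ (K + 1) / 2 := by
      calc (∑ m, w m * ((p m - (1 - p m)) * r ^ K / 2))
          = (∑ m, w m * (p m - (1 - p m))) * (r ^ K / 2) := by
            rw [Finset.sum_congr rfl fun m _ => key m, ← Finset.sum_mul]
        _ = r ^ (K + 1) / 2 := by rw [← hr]; ring
    have hhalf : (∑ m, w m * (1 / 2 : ℝ)) = 1 / 2 := by
      rw [← Finset.sum_mul, hw1, one_mul]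
    have h1 : ∑ m, w m • (csbmMu μ1 μ2 w p (K + 1) m).1
        = (1 / 2 : ℝ) • (μ1 + μ2) + (r ^ (K + 1) / 2) • (μ1 - μ2) := by
      rw [Finset.sum_congr rfl fun m _ => by rw [(ih m).1]]
      simp only [smul_add, smul_smul, Finset.sum_add_distrib, ← Finset.sum_smul,
        hs, hhalf]
    have h2 : ∑ m, w m • (csbmMu μ1 μ2 w p (K + 1) m).2
        = (1 / 2 : ℝ) • (μ1 + μ2) - (r ^ (K + 1) / 2) • (μ1 - μ2) := by
      rw [Finset.sum_congr rfl fun m _ => by rw [(ih m).2]]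
      simp only [smul_sub, smul_add, smul_smul, Finset.sum_sub_distrib,
        Finset.sum_add_distrib, ← Finset.sum_smul, hs, hhalf]
    constructor
    · show p i • _ + (1 - p i) • _ = _
      rw [h1, h2]
      module
    · show (1 - p i) • _ + p i • _ = _
      rw [h1, h2]
      module
end

section
/- Suppose additionally that E is a real normed vector space. Then for every L ≥ 1 and all subgroup indices i, j ∈ M, the distance between the class-1 aggregated means of the two subgroups equals ‖μ⁽ᴸ⁾₁ᵢ − μ⁽ᴸ⁾₁ⱼ‖ = |p i − p j| · |r|^(L−1) · ‖μ₁ − μ₂‖. -/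
open scoped BigOperators

theorem csbm_cross_subgroup_class1_mean_distance
    {E : Type*} [NormedAddCommGroup E] [NormedSpace ℝ E] {M : Type*} [Fintype M]
    (μ1 μ2 : E) (w p : M → ℝ)
    (hw : ∀ m, 0 ≤ w m) (hw1 : ∑ m, w m = 1)
    (hp0 : ∀ m, 0 ≤ p m) (hp1 : ∀ m, p m ≤ 1)
    (r : ℝ) (hr : r = ∑ m, w m * (p m - (1 - p m)))
    (L : ℕ) (hL : 1 ≤ L) (i j : M) :
    ‖(csbmMu μ1 μ2 w p L i).1 - (csbmMu μ1 μ2 w p L j).1‖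
      = |p i - p j| * |r| ^ (L - 1) * ‖μ1 - μ2‖ := by
  have key : ∀ n : ℕ,
      (∑ m, w m • (csbmMu μ1 μ2 w p n m).1) - (∑ m, w m • (csbmMu μ1 μ2 w p n m).2)
        = r ^ n • (μ1 - μ2) := by
    intro n
    induction n with
    | zero =>
        simp [csbmMu, ← Finset.sum_sub_distrib, ← smul_sub, ← Finset.sum_smul, hw1]
    | succ n ih =>
        have : ∀ m, w m • (csbmMu μ1 μ2 w p (n+1) m).1
            - w m • (csbmMu μ1 μ2 w p (n+1) m).2
            = (w m * (p m - (1 - p m))) • (r ^ n • (μ1 - μ2)) := by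
          intro m
          rw [← ih]
          simp only [csbmMu]
          rw [← smul_sub]
          rw [show p m • (∑ m, w m • (csbmMu μ1 μ2 w p n m).1)
              + (1 - p m) • (∑ m, w m • (csbmMu μ1 μ2 w p n m).2)
              - ((1 - p m) • (∑ m, w m • (csbmMu μ1 μ2 w p n m).1)
              + p m • (∑ m, w m • (csbmMu μ1 μ2 w p n m).2))
              = (p m - (1 - p m)) • ((∑ m, w m • (csbmMu μ1 μ2 w p n m).1)
                - (∑ m, w m • (csbmMu μ1 μ2 w p n m).2)) by
            simp [sub_smul, smul_sub]; abel]
          rw [smul_smul]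
        rw [← Finset.sum_sub_distrib]
        simp only [this, smul_smul, ← Finset.sum_smul]
        congr 1
        rw [hr, pow_succ, mul_comm, Finset.sum_mul]
  obtain ⟨n, rfl⟩ : ∃ n, L = n + 1 := ⟨L - 1, (Nat.succ_pred_eq_of_pos hL).symm⟩
  have h1 : (csbmMu μ1 μ2 w p (n+1) i).1 - (csbmMu μ1 μ2 w p (n+1) j).1
      = ((p i - p j) * r ^ n) • (μ1 - μ2) := by
    simp only [csbmMu]
    rw [show p i • (∑ m, w m • (csbmMu μ1 μ2 w p n m).1)
        + (1 - p i) • (∑ m, w m • (csbmMu μ1 μ2 w p n m).2)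
        - (p j • (∑ m, w m • (csbmMu μ1 μ2 w p n m).1)
        + (1 - p j) • (∑ m, w m • (csbmMu μ1 μ2 w p n m).2))
        = (p i - p j) • ((∑ m, w m • (csbmMu μ1 μ2 w p n m).1)
          - (∑ m, w m • (csbmMu μ1 μ2 w p n m).2)) by
      simp [sub_smul, smul_sub]; abel]
    rw [key n, smul_smul]
  rw [h1, norm_smul, Real.norm_eq_abs, abs_mul, abs_pow]
  simp
end

section
/- (Abstract form of Lemma 1.) Let E be a real inner product space, σ > 0, R ≥ 0, and f_u, f_v, a₁, a₂, b₁, b₂ ∈ E. Assume ‖f_u − a₁‖ ≤ R, ‖f_u − a₂‖ ≤ R, ‖f_v − b₁‖ ≤ R, ‖f_v − b₂‖ ≤ R, and that the class-2 mean shift is the negative of the class-1 mean shift: a₂ − b₂ = −(a₁ − b₁). Then |P_σ(f_u; a₁, a₂) − P_σ(f_v; b₁, b₂)| ≤ (2R/σ²) · (‖f_u − f_v‖ + ‖a₁ − b₁‖). -/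
/-!
The posterior is the logistic sigmoid of the log-odds `(‖f - b‖² - ‖f - a‖²) / (2σ²)`, and the
sigmoid is 1-Lipschitz, so it suffices to compare the two log-odds. Writing
`‖x - b‖² - ‖x - a‖² = ⟪(x - a) + (x - b), a - b⟫`, the opposite mean shifts make the difference
of the two numerators `2⟪fu - fv, a₁ - a₂⟫ + 2⟪(fv - b₁) + (fv - b₂), a₁ - b₁⟫`, and each
inner product is bounded by Cauchy–Schwarz, with `‖a₁ - a₂‖ ≤ 2R` and `‖(fv - b₁) + (fv - b₂)‖ ≤ 2R`.
-/

open scoped BigOperators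

/-- Gaussian two-class posterior: the probability that feature `f` was drawn from the
Gaussian with mean `a` rather than mean `b` (common isotropic variance `σ²`, equal priors). -/
noncomputable def gaussPosterior {E : Type*} [NormedAddCommGroup E]
    [InnerProductSpace ℝ E] (σ : ℝ) (f a b : E) : ℝ :=
  Real.exp (-‖f - a‖ ^ 2 / (2 * σ ^ 2)) /
    (Real.exp (-‖f - a‖ ^ 2 / (2 * σ ^ 2)) + Real.exp (-‖f - b‖ ^ 2 / (2 * σ ^ 2)))

open Real RealInnerProductSpace

lemma Real.lipschitzWith_sigmoid : LipschitzWith 1 sigmoid := by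
  refine lipschitzWith_of_nnnorm_deriv_le differentiable_sigmoid fun x => ?_
  rw [← NNReal.coe_le_coe, coe_nnnorm, deriv_sigmoid, Real.norm_eq_abs, NNReal.coe_one,
    abs_of_pos (mul_pos (sigmoid_pos x) (sub_pos.2 (sigmoid_lt_one x)))]
  nlinarith [sigmoid_pos x, sigmoid_lt_one x]

lemma Real.abs_sigmoid_sub_sigmoid_le (s t : ℝ) : |sigmoid s - sigmoid t| ≤ |s - t| := by
  simpa [Real.dist_eq] using lipschitzWith_sigmoid.dist_le_mul s t

section InnerProductSpace

variable {E : Type*} [NormedAddCommGroup E] [InnerProductSpace ℝ E]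

lemma gaussPosterior_eq_sigmoid (σ : ℝ) (f a b : E) :
    gaussPosterior σ f a b = sigmoid ((‖f - b‖ ^ 2 - ‖f - a‖ ^ 2) / (2 * σ ^ 2)) := by
  rw [gaussPosterior, sigmoid_def, ← one_div,
    div_eq_div_iff (by positivity) (by positivity), mul_add, mul_one, ← Real.exp_add]
  ring_nf

lemma norm_sq_sub_norm_sq_eq_inner_add_sub (u v : E) :
    ‖u‖ ^ 2 - ‖v‖ ^ 2 = ⟪u + v, u - v⟫ := by
  rw [inner_add_left, inner_sub_right, inner_sub_right, real_inner_self_eq_norm_sq,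
    real_inner_self_eq_norm_sq, real_inner_comm u v]
  ring

lemma norm_sub_sq_sub_norm_sub_sq (x a b : E) :
    ‖x - b‖ ^ 2 - ‖x - a‖ ^ 2 = ⟪(x - a) + (x - b), a - b⟫ := by
  rw [norm_sq_sub_norm_sq_eq_inner_add_sub]
  congr 1 <;> abel

lemma norm_sub_sq_diff_sub_eq_of_shift {fu fv a₁ a₂ b₁ b₂ : E}
    (hshift : a₂ - b₂ = -(a₁ - b₁)) :
    (‖fu - a₂‖ ^ 2 - ‖fu - a₁‖ ^ 2) - (‖fv - b₂‖ ^ 2 - ‖fv - b₁‖ ^ 2)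
      = 2 * ⟪fu - fv, a₁ - a₂⟫ + 2 * ⟪(fv - b₁) + (fv - b₂), a₁ - b₁⟫ := by
  have hb : b₁ - b₂ = (a₁ - a₂) - (2 : ℝ) • (a₁ - b₁) := by
    linear_combination (norm := module) hshift
  have hsum : (fu - a₁) + (fu - a₂) = ((fv - b₁) + (fv - b₂)) + (2 : ℝ) • (fu - fv) := by
    linear_combination (norm := module) -hshift
  rw [norm_sub_sq_sub_norm_sub_sq, norm_sub_sq_sub_norm_sub_sq, hb, hsum]
  simp only [inner_add_left, inner_sub_right, inner_smul_left, inner_smul_right, conj_trivial]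
  ring

lemma abs_norm_sub_sq_diff_sub_le_of_shift {R : ℝ} {fu fv a₁ a₂ b₁ b₂ : E}
    (hua₁ : ‖fu - a₁‖ ≤ R) (hua₂ : ‖fu - a₂‖ ≤ R)
    (hvb₁ : ‖fv - b₁‖ ≤ R) (hvb₂ : ‖fv - b₂‖ ≤ R)
    (hshift : a₂ - b₂ = -(a₁ - b₁)) :
    |(‖fu - a₂‖ ^ 2 - ‖fu - a₁‖ ^ 2) - (‖fv - b₂‖ ^ 2 - ‖fv - b₁‖ ^ 2)|
      ≤ 4 * R * (‖fu - fv‖ + ‖a₁ - b₁‖) := by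
  have ha : ‖a₁ - a₂‖ ≤ 2 * R := by
    calc ‖a₁ - a₂‖ = ‖(fu - a₂) - (fu - a₁)‖ := by congr 1; abel
      _ ≤ ‖fu - a₂‖ + ‖fu - a₁‖ := norm_sub_le _ _
      _ ≤ 2 * R := by linarith
  have hb : ‖(fv - b₁) + (fv - b₂)‖ ≤ 2 * R :=
    (norm_add_le _ _).trans (by linarith)
  have hu : |⟪fu - fv, a₁ - a₂⟫| ≤ ‖fu - fv‖ * (2 * R) :=
    (abs_real_inner_le_norm _ _).trans (by gcongr)
  have hv : |⟪(fv - b₁) + (fv - b₂), a₁ - b₁⟫| ≤ 2 * R * ‖a₁ - b₁‖ :=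
    (abs_real_inner_le_norm _ _).trans (by gcongr)
  rw [norm_sub_sq_diff_sub_eq_of_shift hshift]
  calc _ ≤ |2 * ⟪fu - fv, a₁ - a₂⟫| + |2 * ⟪(fv - b₁) + (fv - b₂), a₁ - b₁⟫| := abs_add_le _ _
    _ ≤ 2 * (‖fu - fv‖ * (2 * R)) + 2 * (2 * R * ‖a₁ - b₁‖) := by
      rw [abs_mul, abs_mul, abs_two]
      gcongr
    _ = 4 * R * (‖fu - fv‖ + ‖a₁ - b₁‖) := by ring

end InnerProductSpace

theorem gauss_posterior_diff_abstract_lemma1_general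
    {E : Type*} [NormedAddCommGroup E] [InnerProductSpace ℝ E]
    (σ R : ℝ) (fu fv a₁ a₂ b₁ b₂ : E)
    (hua₁ : ‖fu - a₁‖ ≤ R) (hua₂ : ‖fu - a₂‖ ≤ R)
    (hvb₁ : ‖fv - b₁‖ ≤ R) (hvb₂ : ‖fv - b₂‖ ≤ R)
    (hshift : a₂ - b₂ = -(a₁ - b₁)) :
    |gaussPosterior σ fu a₁ a₂ - gaussPosterior σ fv b₁ b₂|
      ≤ (2 * R / σ ^ 2) * (‖fu - fv‖ + ‖a₁ - b₁‖) := by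
  rw [gaussPosterior_eq_sigmoid, gaussPosterior_eq_sigmoid]
  calc _ ≤ |(‖fu - a₂‖ ^ 2 - ‖fu - a₁‖ ^ 2) / (2 * σ ^ 2)
          - (‖fv - b₂‖ ^ 2 - ‖fv - b₁‖ ^ 2) / (2 * σ ^ 2)| := abs_sigmoid_sub_sigmoid_le _ _
    _ = |(‖fu - a₂‖ ^ 2 - ‖fu - a₁‖ ^ 2) - (‖fv - b₂‖ ^ 2 - ‖fv - b₁‖ ^ 2)| / (2 * σ ^ 2) := by
      rw [← sub_div, abs_div, abs_of_nonneg (by positivity : (0 : ℝ) ≤ 2 * σ ^ 2)]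
    _ ≤ 4 * R * (‖fu - fv‖ + ‖a₁ - b₁‖) / (2 * σ ^ 2) :=
      div_le_div_of_nonneg_right
        (abs_norm_sub_sq_diff_sub_le_of_shift hua₁ hua₂ hvb₁ hvb₂ hshift) (by positivity)
    _ = (2 * R / σ ^ 2) * (‖fu - fv‖ + ‖a₁ - b₁‖) := by ring

theorem gauss_posterior_diff_abstract_lemma1
    {E : Type*} [NormedAddCommGroup E] [InnerProductSpace ℝ E]
    (σ R : ℝ) (hσ : 0 < σ) (hR : 0 ≤ R) (fu fv a₁ a₂ b₁ b₂ : E)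
    (hua₁ : ‖fu - a₁‖ ≤ R) (hua₂ : ‖fu - a₂‖ ≤ R)
    (hvb₁ : ‖fv - b₁‖ ≤ R) (hvb₂ : ‖fv - b₂‖ ≤ R)
    (hshift : a₂ - b₂ = -(a₁ - b₁)) :
    |gaussPosterior σ fu a₁ a₂ - gaussPosterior σ fv b₁ b₂|
      ≤ (2 * R / σ ^ 2) * (‖fu - fv‖ + ‖a₁ - b₁‖) :=
  gauss_posterior_diff_abstract_lemma1_general σ R fu fv a₁ a₂ b₁ b₂ hua₁ hua₂ hvb₁ hvb₂ hshift
end
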